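/- arXiv:2212.12828 — 4 statements merged into one kernel-verified Lean document; each statement's English description precedes it below -/
import Mathlib

section
/- Let K be a field, S = K[x_1, …, x_n], and let I = I_{a,n,d} be the ideal of Veronese type associated to integers n, d ≥ 1 and a vector a = (a_1, …, a_n) with d ≥ a_1 ≥ … ≥ a_n ≥ 1. Then for every integer k ≥ 1, the minimal number of generators of I^k is μ(I^k) = Σ_{J ⊆ {1,…,n}} (−1)^{|J|} · C(kd + n − 1 − Σ_{i ∈ J}(k·a_i + 1), n − 1), where the binomial coefficient is taken to be 0 whenever kd + n − 1 < Σ_{i ∈ J}(k·a_i + 1). -/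
/-- Binomial coefficient with an integer top argument, taken to be `0` when the
top argument is negative. -/
def zchoose (m : ℤ) (r : ℕ) : ℕ := if 0 ≤ m then m.toNat.choose r else 0

/-- The minimal number of generators of an ideal. -/
noncomputable def mu {R : Type*} [CommRing R] (I : Ideal R) : ℕ :=
  sInf {m | ∃ s : Finset R, s.card = m ∧ Ideal.span (s : Set R) = I}

/-- The ideal of Veronese type `I_{a,n,d}`, generated by all monomials
`x_1^{b_1} ⋯ x_n^{b_n}` with `∑ b_i = d` and `b_i ≤ a_i` for all `i`. -/
noncomputable def veroneseType (K : Type*) [Field K] (n d : ℕ) (a : Fin n → ℕ) :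
    Ideal (MvPolynomial (Fin n) K) :=
  Ideal.span {m | ∃ b : Fin n → ℕ, (∑ i, b i) = d ∧ (∀ i, b i ≤ a i) ∧
    m = ∏ i, MvPolynomial.X i ^ b i}


section VTaux
open MvPolynomial Finset

lemma card_tuple : ∀ (k n : ℕ), (Finset.Nat.antidiagonalTuple (k+1) n).card = (n + k).choose k := by
  intro k
  induction k with
  | zero => intro n; simp [Finset.Nat.antidiagonalTuple_one]
  | succ k ih =>
    intro n
    have hlen : (Finset.Nat.antidiagonalTuple (k+2) n).card
        = ((List.Nat.antidiagonal n).map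
            (fun ni => (List.Nat.antidiagonalTuple (k+1) ni.2).length)).sum := by
      rw [Finset.card_def]
      change (Multiset.ofList (List.Nat.antidiagonalTuple (k+2) n)).card = _
      rw [Multiset.coe_card]
      show (List.Nat.antidiagonalTuple (k+2) n).length = _
      rw [List.Nat.antidiagonalTuple, List.length_flatMap]
      simp only [Function.comp_def, List.length_map]
    have hcard : ∀ m, (List.Nat.antidiagonalTuple (k+1) m).length = (m + k).choose k := by
      intro m
      have := ih m
      rw [Finset.card_def] at this
      exact this
    rw [hlen]
    simp only [List.length_map, hcard]
    rw [List.Nat.antidiagonal, List.map_map]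
    have h1 : ((List.range (n+1)).map ((fun (ni : ℕ × ℕ) => (ni.2 + k).choose k) ∘ fun i => (i, n - i))).sum
        = ∑ i ∈ Finset.range (n+1), (n - i + k).choose k := by
      rw [← Multiset.sum_coe, ← Multiset.map_coe]; rfl
    rw [h1, ← Finset.sum_range_reflect]
    have h2 : ∀ i ∈ Finset.range (n+1), (n - (n + 1 - 1 - i) + k).choose k = (i+k).choose k := by
      intro i hi
      simp only [Finset.mem_range] at hi
      congr 2
      omega
    rw [Finset.sum_congr rfl h2]
    have h3 : ∑ i ∈ Finset.range (n+1), (i+k).choose k = ∑ m ∈ Finset.Icc k (n+k), m.choose k := by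
      rw [← Finset.Ico_add_one_right_eq_Icc, Finset.sum_Ico_eq_sum_range]
      have : n + k + 1 - k = n + 1 := by omega
      rw [this]
      exact Finset.sum_congr rfl fun i _ => by rw [add_comm]
    rw [h3, Nat.sum_Icc_choose, add_assoc]

lemma count_ge (m : ℕ) (c : Fin (m+1) → ℕ) (J : Finset (Fin (m+1))) (D : ℕ) :
    ((Finset.Nat.antidiagonalTuple (m+1) D).filter (fun b => ∀ i ∈ J, c i + 1 ≤ b i)).card
      = if (∑ i ∈ J, (c i + 1)) ≤ D then (D - ∑ i ∈ J, (c i + 1) + m).choose m else 0 := by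
  set S := ∑ i ∈ J, (c i + 1) with hS
  set sh : Fin (m+1) → ℕ := fun i => if i ∈ J then c i + 1 else 0 with hsh
  have hshsum : ∑ i, sh i = S := by
    rw [hsh, Finset.sum_ite_mem, Finset.univ_inter]
  by_cases h : S ≤ D
  · rw [if_pos h, ← card_tuple m (D - S)]
    apply Finset.card_bij' (fun b _ => fun i => b i - sh i) (fun b _ => fun i => b i + sh i)
    · intro b hb
      simp only [Finset.mem_filter, Finset.Nat.mem_antidiagonalTuple] at hb ⊢
      obtain ⟨h1, h2⟩ := hb
      have hle : ∀ i, sh i ≤ b i := by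
        intro i
        by_cases hi : i ∈ J
        · simpa [hsh, hi] using h2 i hi
        · simp [hsh, hi]
      rw [Finset.sum_tsub_distrib _ (fun i _ => hle i), h1, hshsum]
    · intro b hb
      simp only [Finset.Nat.mem_antidiagonalTuple] at hb
      simp only [Finset.mem_filter, Finset.Nat.mem_antidiagonalTuple]
      constructor
      · rw [Finset.sum_add_distrib, hb, hshsum]; omega
      · intro i hi
        simp [hsh, hi]
    · intro b hb
      simp only [Finset.mem_filter, Finset.Nat.mem_antidiagonalTuple] at hb
      funext i
      by_cases hi : i ∈ J
      · have := hb.2 i hi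
        simp only [hsh, if_pos hi] at *
        omega
      · simp [hsh, hi]
    · intro b hb
      funext i
      simp
  · rw [if_neg h]
    rw [Finset.card_eq_zero, Finset.filter_eq_empty_iff]
    intro b hb
    simp only [Finset.Nat.mem_antidiagonalTuple] at hb
    intro hcon
    have : S ≤ ∑ i, b i := by
      calc S = ∑ i, sh i := hshsum.symm
      _ ≤ ∑ i, b i := by
        apply Finset.sum_le_sum
        intro i _
        by_cases hi : i ∈ J
        · simpa [hsh, hi] using hcon i hi
        · simp [hsh, hi]
    omega

lemma inclusion_exclusion_count (m D : ℕ) (c : Fin (m+1) → ℕ) :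
    (((Finset.Nat.antidiagonalTuple (m+1) D).filter (fun b => ∀ i, b i ≤ c i)).card : ℤ)
      = ∑ J : Finset (Fin (m+1)), (-1:ℤ)^J.card *
          ((Finset.Nat.antidiagonalTuple (m+1) D).filter (fun b => ∀ i ∈ J, c i + 1 ≤ b i)).card := by
  have key : ∀ J : Finset (Fin (m+1)),
      (((Finset.Nat.antidiagonalTuple (m+1) D).filter (fun b => ∀ i ∈ J, c i + 1 ≤ b i)).card : ℤ)
        = ∑ b ∈ Finset.Nat.antidiagonalTuple (m+1) D, if (∀ i ∈ J, c i + 1 ≤ b i) then (1:ℤ) else 0 := by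
    intro J
    rw [Finset.sum_boole]
  simp_rw [key, Finset.mul_sum]
  rw [Finset.sum_comm]
  have inner : ∀ b : Fin (m+1) → ℕ,
      (∑ J : Finset (Fin (m+1)), (-1:ℤ)^J.card * (if (∀ i ∈ J, c i + 1 ≤ b i) then (1:ℤ) else 0))
        = if (∀ i, b i ≤ c i) then 1 else 0 := by
    intro b
    set T : Finset (Fin (m+1)) := Finset.univ.filter (fun i => c i + 1 ≤ b i) with hT
    have cond_iff : ∀ J : Finset (Fin (m+1)), (∀ i ∈ J, c i + 1 ≤ b i) ↔ J ⊆ T := by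
      intro J
      constructor
      · intro h i hi; have := h i hi; simp [hT]; omega
      · intro h i hi; have := h hi; simp [hT] at this; exact this
    have : (∑ J : Finset (Fin (m+1)), (-1:ℤ)^J.card * (if (∀ i ∈ J, c i + 1 ≤ b i) then (1:ℤ) else 0))
        = ∑ J ∈ T.powerset, (-1:ℤ)^J.card := by
      rw [← Finset.sum_subset (Finset.subset_univ T.powerset)]
      · apply Finset.sum_congr rfl
        intro J hJ
        rw [Finset.mem_powerset] at hJ
        rw [if_pos ((cond_iff J).mpr hJ), mul_one]
      · intro J _ hJ
        rw [Finset.mem_powerset] at hJ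
        rw [if_neg (fun hc => hJ ((cond_iff J).mp hc)), mul_zero]
    rw [this, Finset.sum_powerset_neg_one_pow_card]
    congr 1
    simp only [hT, Finset.filter_eq_empty_iff, Finset.mem_univ, true_implies]
    apply propext
    constructor
    · intro h i; have := @h i; omega
    · intro h i hi; have := h i; omega
  rw [Finset.sum_congr rfl (fun b _ => inner b), Finset.sum_boole]

lemma zchoose_eq_count (m D S : ℕ) :
    zchoose ((D:ℤ) + m - S) m = if S ≤ D then (D - S + m).choose m else 0 := by
  unfold zchoose
  by_cases h : S ≤ D
  · rw [if_pos h, if_pos (by omega)]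
    congr 1
    omega
  · rw [if_neg h]
    by_cases h2 : (0:ℤ) ≤ (D:ℤ) + m - S
    · rw [if_pos h2]
      apply Nat.choose_eq_zero_of_lt
      omega
    · rw [if_neg h2]

lemma count_bounded (m D : ℕ) (c : Fin (m+1) → ℕ) :
    (((Finset.Nat.antidiagonalTuple (m+1) D).filter (fun b => ∀ i, b i ≤ c i)).card : ℤ)
      = ∑ J : Finset (Fin (m+1)), (-1:ℤ)^J.card *
          zchoose ((D:ℤ) + m - ∑ i ∈ J, ((c i : ℤ) + 1)) m := by
  rw [inclusion_exclusion_count]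
  apply Finset.sum_congr rfl
  intro J _
  congr 1
  have hcast : (∑ i ∈ J, ((c i : ℤ) + 1)) = ((∑ i ∈ J, (c i + 1) : ℕ) : ℤ) := by push_cast; ring
  rw [hcast, count_ge m c J D, zchoose_eq_count]


lemma degree_add' {n : ℕ} (u v : Fin n →₀ ℕ) : (u + v).degree = u.degree + v.degree := by
  simp only [Finsupp.degree_eq_weight_one, map_add]

variable {K : Type*} [Field K] {n : ℕ}

noncomputable def mon (K : Type*) [Field K] {n : ℕ} (b : Fin n → ℕ) :
    MvPolynomial (Fin n) K := ∏ i, X i ^ b i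

lemma mon_eq_monomial (b : Fin n → ℕ) :
    mon K b = monomial (Finsupp.equivFunOnFinite.symm b) (1 : K) := by
  rw [← prod_X_pow_eq_monomial, mon]
  apply (Finset.prod_subset (Finset.subset_univ _) _).symm
  intro x _ hx
  rw [Finsupp.notMem_support_iff] at hx
  simp only [Finsupp.coe_equivFunOnFinite_symm] at hx ⊢
  rw [hx, pow_zero]

lemma degree_equivFun (b : Fin n → ℕ) :
    (Finsupp.equivFunOnFinite.symm b).degree = ∑ i, b i := by
  rw [Finsupp.degree]
  apply Finset.sum_subset (Finset.subset_univ _)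
  intro x _ hx
  rwa [Finsupp.notMem_support_iff] at hx

lemma coeff_zero_of_span (D : ℕ) (Bf : Finset (Fin n → ℕ))
    (hdeg : ∀ b ∈ Bf, ∑ i, b i = D) (p : MvPolynomial (Fin n) K)
    (hp : p ∈ Ideal.span (mon K '' (Bf : Set (Fin n → ℕ)))) :
    ∀ μ : Fin n →₀ ℕ, μ.degree < D → MvPolynomial.coeff μ p = 0 := by
  refine Submodule.span_induction ?_ ?_ ?_ ?_ hp
  · rintro x ⟨b, hb, rfl⟩
    intro μ hμ
    rw [mon_eq_monomial, coeff_monomial]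
    split
    · next h =>
      exfalso
      rw [← h, degree_equivFun, hdeg b hb] at hμ
      omega
    · rfl
  · intro μ _; simp
  · intro x y _ _ hx hy μ hμ
    rw [coeff_add, hx μ hμ, hy μ hμ, add_zero]
  · intro r x _ hx μ hμ
    rw [smul_eq_mul, coeff_mul]
    apply Finset.sum_eq_zero
    intro q hq
    rw [Finset.HasAntidiagonal.mem_antidiagonal] at hq
    have : q.2.degree ≤ μ.degree := by
      rw [← hq, degree_add']
      omega
    rw [hx q.2 (by omega), mul_zero]

lemma mon_injective : Function.Injective (mon K (n := n)) := by
  intro b c h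
  rw [mon_eq_monomial, mon_eq_monomial] at h
  have := monomial_left_injective (R := K) one_ne_zero h
  exact Finsupp.equivFunOnFinite.symm.injective this |> fun h' => h'

lemma mon_add (b c : Fin n → ℕ) : mon K (b + c) = mon K b * mon K c := by
  simp only [mon, Pi.add_apply, pow_add]
  rw [Finset.prod_mul_distrib]


lemma hc_monomial (D : ℕ) (μ : Fin n →₀ ℕ) (hμ : μ.degree = D) (c : K) :
    homogeneousComponent D (monomial μ c) = monomial μ c := by
  ext ν
  rw [coeff_homogeneousComponent]
  split
  · rfl
  · next h =>
    rw [coeff_monomial]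
    split
    · next h2 => exfalso; rw [← h2] at h; exact h hμ
    · rfl

lemma hc_mul_of_coeff_zero (D : ℕ) (p r : MvPolynomial (Fin n) K)
    (hp : ∀ μ : Fin n →₀ ℕ, μ.degree < D → coeff μ p = 0) :
    homogeneousComponent D (r * p) = (coeff 0 r) • homogeneousComponent D p := by
  ext μ
  rw [coeff_smul, coeff_homogeneousComponent, coeff_homogeneousComponent]
  split
  · next hμ =>
    rw [coeff_mul]
    rw [Finset.sum_eq_single_of_mem ((0 : Fin n →₀ ℕ), μ) (by rw [Finset.HasAntidiagonal.mem_antidiagonal, zero_add])]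
    · rfl
    · rintro ⟨u, v⟩ hq hne
      rw [Finset.HasAntidiagonal.mem_antidiagonal] at hq
      rcases lt_or_eq_of_le (show v.degree ≤ D by
          rw [← hμ, ← hq]; simp only [Finsupp.degree_eq_weight_one, map_add]; omega) with h | h
      · rw [hp v h, mul_zero]
      · exfalso
        have hu : u.degree = 0 := by
          have : u.degree + v.degree = D := by
            rw [← hμ, ← hq]; simp only [Finsupp.degree_eq_weight_one, map_add]
          omega
        have : u = 0 := (Finsupp.degree_eq_zero_iff u).mp hu
        subst this
        rw [zero_add] at hq
        subst hq
        exact hne rfl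
  · rw [smul_zero]


lemma exists_between'' {n : ℕ} : ∀ (t : ℕ) (L U : Fin n → ℕ) (d : ℕ),
    (∀ i, L i ≤ U i) → (∑ i, L i ≤ d) → (d ≤ ∑ i, U i) → d - ∑ i, L i = t →
    ∃ c : Fin n → ℕ, (∀ i, L i ≤ c i) ∧ (∀ i, c i ≤ U i) ∧ ∑ i, c i = d := by
  intro t
  induction t with
  | zero =>
    intro L U d hLU h1 h2 ht
    exact ⟨L, fun i => le_refl _, hLU, by omega⟩
  | succ t ih =>
    intro L U d hLU h1 h2 ht
    have hlt : ∑ i, L i < d := by omega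
    have : ∃ i, L i < U i := by
      by_contra hcon
      push_neg at hcon
      have : ∑ i, U i ≤ ∑ i, L i := Finset.sum_le_sum (fun i _ => hcon i)
      omega
    obtain ⟨i, hi⟩ := this
    set L' := Function.update L i (L i + 1) with hL'
    have hsum : ∑ j, L' j = ∑ j, L j + 1 := by
      have h0 : ∑ j, L j = L i + ∑ j ∈ Finset.univ.erase i, L j :=
        (Finset.add_sum_erase _ _ (Finset.mem_univ i)).symm
      rw [hL', Finset.sum_update_of_mem (Finset.mem_univ i), ← Finset.erase_eq]
      omega
    have hLU' : ∀ j, L' j ≤ U j := by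
      intro j
      rcases eq_or_ne j i with rfl | hj
      · simp [hL']; omega
      · rw [hL', Function.update_of_ne hj]; exact hLU j
    obtain ⟨c, hc1, hc2, hc3⟩ := ih L' U d hLU' (by omega) h2 (by omega)
    refine ⟨c, fun j => ?_, hc2, hc3⟩
    rcases eq_or_ne j i with rfl | hj
    · have := hc1 j; rw [hL', Function.update_self] at this; omega
    · have := hc1 j; rwa [hL', Function.update_of_ne hj] at this

lemma split_exponent {n d : ℕ} (a b : Fin n → ℕ) (k : ℕ) (hk : 1 ≤ k)
    (hsum : ∑ i, b i = (k+1)*d) (hb : ∀ i, b i ≤ (k+1) * a i) :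
    ∃ c e : Fin n → ℕ, (∑ i, c i = d) ∧ (∀ i, c i ≤ a i) ∧
      (∑ i, e i = k*d) ∧ (∀ i, e i ≤ k * a i) ∧ b = e + c := by
  have hsum' : ∑ i, b i = k*d + d := by rw [hsum]; ring
  set L : Fin n → ℕ := fun i => b i - k * a i with hL
  set U : Fin n → ℕ := fun i => min (b i) (a i) with hU
  have hLU : ∀ i, L i ≤ U i := by
    intro i
    have := hb i
    simp only [hL, hU]
    have : (k+1) * a i = k * a i + a i := by ring
    omega
  have hminK : k * d ≤ ∑ i, min (b i) (k * a i) := by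
    have key : ∀ i, k * b i ≤ (k+1) * min (b i) (k * a i) := by
      intro i
      rcases le_or_gt (b i) (k * a i) with h | h
      · rw [min_eq_left h]; nlinarith
      · rw [min_eq_right (le_of_lt h)]
        have := hb i
        have h1 : k * b i ≤ k * ((k+1) * a i) := Nat.mul_le_mul_left k (hb i)
        nlinarith
    have : k * ∑ i, b i ≤ (k+1) * ∑ i, min (b i) (k * a i) := by
      rw [Finset.mul_sum, Finset.mul_sum]
      exact Finset.sum_le_sum (fun i _ => key i)
    rw [hsum] at this
    nlinarith
  have hLsum : ∑ i, L i ≤ d := by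
    have heq : ∀ i, L i = b i - min (b i) (k * a i) := by
      intro i; simp only [hL]; omega
    have : ∑ i, L i = ∑ i, b i - ∑ i, min (b i) (k * a i) := by
      rw [Finset.sum_congr rfl (fun i _ => heq i)]
      rw [Finset.sum_tsub_distrib]
      intro i _
      exact min_le_left _ _
    omega
  have hUsum : d ≤ ∑ i, U i := by
    have key : ∀ i, b i ≤ (k+1) * min (b i) (a i) := by
      intro i
      rcases le_or_gt (b i) (a i) with h | h
      · rw [min_eq_left h]; nlinarith
      · rw [min_eq_right (le_of_lt h)]; exact hb i
    have : (k+1) * d ≤ (k+1) * ∑ i, min (b i) (a i) := by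
      rw [← hsum, Finset.mul_sum]
      exact Finset.sum_le_sum (fun i _ => key i)
    exact Nat.le_of_mul_le_mul_left this (by omega)
  obtain ⟨c, hc1, hc2, hc3⟩ := exists_between'' (d - ∑ i, L i) L U d hLU hLsum hUsum rfl
  refine ⟨c, fun i => b i - c i, hc3, fun i => le_trans (hc2 i) (min_le_right _ _), ?_, ?_, ?_⟩
  · have hcb : ∀ i, c i ≤ b i := fun i => le_trans (hc2 i) (min_le_left _ _)
    have : ∑ i, (b i - c i) = ∑ i, b i - ∑ i, c i := by
      rw [Finset.sum_tsub_distrib]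
      intro i _; exact hcb i
    rw [this, hsum', hc3]
    omega
  · intro i
    have := hc1 i
    simp only [hL] at this
    show b i - c i ≤ k * a i
    omega
  · funext i
    have hcb : c i ≤ b i := le_trans (hc2 i) (min_le_left _ _)
    simp only [Pi.add_apply]
    omega

lemma veroneseType_pow (K : Type*) [Field K] (n d : ℕ) (a : Fin n → ℕ) (k : ℕ) :
    (veroneseType K n d a)^(k+1) = Ideal.span {m | ∃ b : Fin n → ℕ,
      (∑ i, b i) = (k+1)*d ∧ (∀ i, b i ≤ (k+1) * a i) ∧ m = ∏ i, MvPolynomial.X i ^ b i} := by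
  induction k with
  | zero => rw [pow_one, veroneseType]; congr 1; simp [one_mul]
  | succ k ih =>
    rw [pow_succ, ih, veroneseType, Ideal.span_mul_span']
    congr 1
    ext m
    constructor
    · rintro ⟨x, ⟨e, he1, he2, rfl⟩, y, ⟨c, hc1, hc2, rfl⟩, rfl⟩
      refine ⟨e + c, ?_, ?_, ?_⟩
      · simp only [Pi.add_apply]
        rw [Finset.sum_add_distrib, he1, hc1]; ring
      · intro i
        have := he2 i; have := hc2 i
        have : (k+1+1) * a i = (k+1) * a i + a i := by ring
        simp only [Pi.add_apply]
        omega
      · rw [← mon, ← mon, ← mon, mon_add]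
    · rintro ⟨b, hb1, hb2, rfl⟩
      obtain ⟨c, e, hc1, hc2, he1, he2, hbe⟩ := split_exponent a b (k+1) (by omega)
        (by rw [hb1]) hb2
      refine ⟨mon K e, ⟨e, he1, he2, rfl⟩, mon K c, ⟨c, hc1, hc2, rfl⟩, ?_⟩
      show mon K e * mon K c = _
      rw [← mon_add, ← hbe, mon]

lemma mu_span_monomials (D : ℕ) (Bf : Finset (Fin n → ℕ))
    (hdeg : ∀ b ∈ Bf, ∑ i, b i = D) :
    mu (Ideal.span (mon K '' (Bf : Set (Fin n → ℕ)))) = Bf.card := by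
  classical
  set I := Ideal.span (mon K '' (Bf : Set (Fin n → ℕ))) with hI
  have hwit : (Bf.image (mon K)).card = Bf.card ∧
      Ideal.span ((Bf.image (mon K) : Finset _) : Set (MvPolynomial (Fin n) K)) = I := by
    constructor
    · exact Finset.card_image_of_injective _ mon_injective
    · rw [Finset.coe_image]
  apply le_antisymm
  · exact Nat.sInf_le ⟨Bf.image (mon K), hwit.1, hwit.2⟩
  · have hne : {m | ∃ s : Finset (MvPolynomial (Fin n) K), s.card = m ∧
        Ideal.span (s : Set (MvPolynomial (Fin n) K)) = I}.Nonempty :=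
      ⟨Bf.card, Bf.image (mon K), hwit.1, hwit.2⟩
    apply le_csInf hne
    rintro m ⟨s, rfl, hs⟩
    -- main lower bound argument
    set π := homogeneousComponent (σ := Fin n) (R := K) D with hπ
    set sπ : Finset (MvPolynomial (Fin n) K) := s.image π with hsπ
    set W : Submodule K (MvPolynomial (Fin n) K) := Submodule.span K (sπ : Set _) with hW
    have hinI : ∀ x ∈ s, (x : MvPolynomial (Fin n) K) ∈ I := by
      intro x hx
      rw [← hs]
      exact Ideal.subset_span hx
    have hmemW : ∀ b ∈ Bf, mon K b ∈ W := by
      intro b hb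
      have hmem : mon K b ∈ Submodule.span (MvPolynomial (Fin n) K) (s : Set _) := by
        rw [Ideal.submodule_span_eq, hs, hI]
        exact Ideal.subset_span ⟨b, hb, rfl⟩
      obtain ⟨f, -, hf⟩ := Submodule.mem_span_finset.mp hmem
      have hmon : π (mon K b) = mon K b := by
        rw [mon_eq_monomial]
        exact hc_monomial D _ (by rw [degree_equivFun]; exact hdeg b hb) 1
      have : mon K b = ∑ x ∈ s, (coeff 0 (f x)) • π x := by
        conv_lhs => rw [← hmon, ← hf]
        rw [map_sum]
        apply Finset.sum_congr rfl
        intro x hx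
        rw [smul_eq_mul]
        exact hc_mul_of_coeff_zero D x (f x)
          (coeff_zero_of_span D Bf hdeg x (hinI x hx))
      rw [this]
      apply Submodule.sum_mem
      intro x hx
      exact Submodule.smul_mem _ _ (Submodule.subset_span (Finset.mem_coe.mpr
        (Finset.mem_image_of_mem π hx)))
    -- linear independence
    have hli : LinearIndependent K (fun x : {x // x ∈ Bf} => mon K (x : Fin n → ℕ)) := by
      have : (fun x : {x // x ∈ Bf} => mon K (x : Fin n → ℕ))
          = (basisMonomials (Fin n) K) ∘ (fun x : {x // x ∈ Bf} =>
              Finsupp.equivFunOnFinite.symm (x : Fin n → ℕ)) := by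
        funext x
        rw [Function.comp_apply, coe_basisMonomials, mon_eq_monomial]
      rw [this]
      apply (basisMonomials (Fin n) K).linearIndependent.comp
      intro x y hxy
      exact Subtype.ext (Finsupp.equivFunOnFinite.symm.injective hxy)
    set u : {x // x ∈ Bf} → W := fun x => ⟨mon K (x : Fin n → ℕ), hmemW x x.2⟩ with hu
    have hli' : LinearIndependent K u := by
      apply LinearIndependent.of_comp W.subtype
      exact hli
    have h1 : Fintype.card {x // x ∈ Bf} ≤ Module.finrank K W :=
      hli'.fintype_card_le_finrank
    have h2 : Module.finrank K W ≤ sπ.card := finrank_span_finset_le_card sπ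
    have h3 : sπ.card ≤ s.card := Finset.card_image_le
    rw [Fintype.card_coe] at h1
    omega

end VTaux

/-- The minimal number of generators of the `k`-th power of an ideal of Veronese type. -/
theorem stmt1 (K : Type*) [Field K] (n d : ℕ) (hn : 1 ≤ n) (hd : 1 ≤ d)
    (a : Fin n → ℕ) (ha1 : ∀ i, 1 ≤ a i) (had : ∀ i, a i ≤ d) (hmono : Antitone a)
    (k : ℕ) (hk : 1 ≤ k) :
    (mu ((veroneseType K n d a) ^ k) : ℤ) =
      ∑ J : Finset (Fin n), (-1 : ℤ) ^ J.card *
        zchoose ((k : ℤ) * d + n - 1 - ∑ i ∈ J, ((k : ℤ) * a i + 1)) (n - 1) := by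
  classical
  obtain ⟨m, rfl⟩ : ∃ m, n = m + 1 := ⟨n - 1, by omega⟩
  obtain ⟨k', rfl⟩ : ∃ k', k = k' + 1 := ⟨k - 1, by omega⟩
  set D := (k' + 1) * d with hD
  set c : Fin (m+1) → ℕ := fun i => (k' + 1) * a i with hc
  set Bf : Finset (Fin (m+1) → ℕ) :=
    (Finset.Nat.antidiagonalTuple (m+1) D).filter (fun b => ∀ i, b i ≤ c i) with hBf
  have hset : {mm : MvPolynomial (Fin (m+1)) K | ∃ b : Fin (m+1) → ℕ,
      (∑ i, b i) = (k'+1)*d ∧ (∀ i, b i ≤ (k'+1) * a i) ∧ mm = ∏ i, MvPolynomial.X i ^ b i}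
      = mon K '' (Bf : Set (Fin (m+1) → ℕ)) := by
    ext x
    constructor
    · rintro ⟨b, h1, h2, rfl⟩
      refine ⟨b, ?_, rfl⟩
      simp only [hBf, Finset.mem_coe, Finset.mem_filter, Finset.Nat.mem_antidiagonalTuple]
      exact ⟨h1, h2⟩
    · rintro ⟨b, hb, rfl⟩
      simp only [hBf, Finset.mem_coe, Finset.mem_filter,
        Finset.Nat.mem_antidiagonalTuple] at hb
      exact ⟨b, hb.1, hb.2, rfl⟩
  have hmu : mu ((veroneseType K (m+1) d a) ^ (k'+1)) = Bf.card := by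
    rw [veroneseType_pow, hset, mu_span_monomials D Bf]
    intro b hb
    simp only [hBf, Finset.mem_filter, Finset.Nat.mem_antidiagonalTuple] at hb
    exact hb.1
  rw [hmu]
  rw [show (Bf.card : ℤ)
      = ∑ J : Finset (Fin (m+1)), (-1:ℤ)^J.card *
          zchoose ((D:ℤ) + m - ∑ i ∈ J, ((c i : ℤ) + 1)) m from count_bounded m D c]
  refine Finset.sum_congr rfl fun J _ => ?_
  congr 1
  have harg : (D:ℤ) + m - ∑ i ∈ J, ((c i : ℤ)+1)
      = ((((k'+1:ℕ)) : ℤ))*d + ((m+1:ℕ) : ℤ) - 1 - ∑ i ∈ J, ((((k'+1:ℕ)):ℤ)*(a i) + 1) := by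
    simp only [hc, hD]
    push_cast
    ring
  rw [harg]
  norm_num
end

section
/- Let K be a field, S = K[x_1, …, x_n], and let I_{a,n,d} be the ideal of Veronese type associated to integers n, d ≥ 1 and a vector a = (a_1, …, a_n) with d ≥ a_1 ≥ … ≥ a_n ≥ 1. Then for every integer k ≥ 1, the k-th power of I_{a,n,d} is again an ideal of Veronese type; explicitly, (I_{a,n,d})^k = I_{ka, n, kd}, the ideal generated by all monomials x_1^{b_1}⋯x_n^{b_n} with Σ_i b_i = kd and b_i ≤ k·a_i for all i. -/
section ExponentVectors

variable {ι : Type*} [Fintype ι]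

theorem exists_mem_Icc_sum_eq {l u : ι → ℕ} (hlu : l ≤ u) {d : ℕ}
    (hl : ∑ i, l i ≤ d) (hu : d ≤ ∑ i, u i) : ∃ c ∈ Set.Icc l u, ∑ i, c i = d := by
  classical
  induction d, hl using Nat.le_induction with
  | base => exact ⟨l, ⟨le_rfl, hlu⟩, rfl⟩
  | succ d _ ih =>
    obtain ⟨c, ⟨hlc, hcu⟩, rfl⟩ := ih (Nat.le_of_succ_le hu)
    obtain ⟨i, hi⟩ : ∃ i, c i < u i := by
      by_contra! h
      exact hu.not_gt (Nat.lt_succ_of_le (Finset.sum_le_sum fun i _ => h i))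
    refine ⟨c + Pi.single i 1, ⟨hlc.trans le_self_add, fun j => ?_⟩, ?_⟩
    · rcases eq_or_ne j i with rfl | hj
      · simpa using hi
      · simpa [hj] using hcu j
    · simp [Finset.sum_add_distrib]

theorem exists_split_of_sum_eq_succ_mul {k d : ℕ} {a b : ι → ℕ}
    (hsum : ∑ i, b i = (k + 1) * d) (hle : ∀ i, b i ≤ (k + 1) * a i) :
    ∃ c : ι → ℕ, (∀ i, c i ≤ b i) ∧ (∀ i, c i ≤ a i) ∧ ∑ i, c i = d ∧
      ∀ i, b i - c i ≤ k * a i := by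
  have hle' : ∀ i, b i ≤ k * a i + a i := fun i => by simpa [add_one_mul] using hle i
  have hlow : ∀ i, (k + 1) * (b i - k * a i) ≤ b i := fun i => by
    rcases le_total (b i) (k * a i) with h | h
    · simp [Nat.sub_eq_zero_of_le h]
    · have := Nat.mul_le_mul_left k (show b i - k * a i ≤ a i by have := hle' i; omega)
      rw [add_one_mul]
      omega
  have hup : ∀ i, b i ≤ (k + 1) * min (b i) (a i) := fun i => by
    rcases le_total (b i) (a i) with h | h
    · rw [min_eq_left h]; exact Nat.le_mul_of_pos_left _ k.succ_pos
    · rw [min_eq_right h]; exact hle i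
  have hsl : ∑ i, (b i - k * a i) ≤ d := by
    refine Nat.le_of_mul_le_mul_left ?_ k.succ_pos
    rw [Finset.mul_sum, ← hsum]
    exact Finset.sum_le_sum fun i _ => hlow i
  have hsu : d ≤ ∑ i, min (b i) (a i) := by
    refine Nat.le_of_mul_le_mul_left ?_ k.succ_pos
    rw [Finset.mul_sum, ← hsum]
    exact Finset.sum_le_sum fun i _ => hup i
  have hlu : ∀ i, b i - k * a i ≤ min (b i) (a i) := fun i =>
    le_min tsub_le_self (by have := hle' i; omega)
  obtain ⟨c, ⟨hlc, hcu⟩, hc⟩ := exists_mem_Icc_sum_eq hlu hsl hsu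
  exact ⟨c, fun i => (hcu i).trans (min_le_left _ _), fun i => (hcu i).trans (min_le_right _ _),
    hc, fun i => by have := hlc i; simp only at this; omega⟩

end ExponentVectors

namespace veroneseType

open MvPolynomial

variable {K : Type*} [Field K] {n : ℕ}

theorem prod_X_pow_mem {d : ℕ} {a b : Fin n → ℕ} (hsum : ∑ i, b i = d) (hle : ∀ i, b i ≤ a i) :
    ∏ i, X i ^ b i ∈ veroneseType K n d a :=
  Ideal.subset_span ⟨b, hsum, hle, rfl⟩

theorem degree_zero_eq_top (a : Fin n → ℕ) : veroneseType K n 0 a = ⊤ := by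
  refine Ideal.eq_top_of_isUnit_mem _ ?_ isUnit_one
  simpa using prod_X_pow_mem (K := K) (a := a) (b := 0) (by simp) (by simp)

theorem mul_le (d d' : ℕ) (a a' : Fin n → ℕ) :
    veroneseType K n d a * veroneseType K n d' a' ≤
      veroneseType K n (d + d') (fun i => a i + a' i) := by
  rw [veroneseType, veroneseType, Ideal.span_mul_span', Ideal.span_le]
  rintro _ ⟨_, ⟨b, rfl, hb, rfl⟩, _, ⟨c, rfl, hc, rfl⟩, rfl⟩
  dsimp only
  rw [← Finset.prod_mul_distrib]
  simpa only [← pow_add, SetLike.mem_coe] using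
    prod_X_pow_mem Finset.sum_add_distrib fun i => add_le_add (hb i) (hc i)

theorem pow_le (d : ℕ) (a : Fin n → ℕ) :
    ∀ k : ℕ, veroneseType K n d a ^ k ≤ veroneseType K n (k * d) (fun i => k * a i)
  | 0 => by simp [degree_zero_eq_top]
  | k + 1 => by
    simpa only [pow_succ, add_one_mul] using
      (Ideal.mul_mono_left (pow_le d a k)).trans (mul_le _ d _ a)

theorem prod_X_pow_mem_pow {d : ℕ} {a : Fin n → ℕ} :
    ∀ {k : ℕ} {b : Fin n → ℕ}, ∑ i, b i = k * d → (∀ i, b i ≤ k * a i) →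
      ∏ i, X i ^ b i ∈ veroneseType K n d a ^ k
  | 0, _, _, _ => by simp
  | k + 1, b, hsum, hle => by
    obtain ⟨c, hcb, hca, hc, hrest⟩ := exists_split_of_sum_eq_succ_mul hsum hle
    have hsplit : ∏ i, (X i : MvPolynomial (Fin n) K) ^ b i =
        (∏ i, X i ^ (b i - c i)) * ∏ i, X i ^ c i := by
      rw [← Finset.prod_mul_distrib]
      exact Finset.prod_congr rfl fun i _ => by rw [← pow_add, Nat.sub_add_cancel (hcb i)]
    rw [hsplit, pow_succ]
    refine Ideal.mul_mem_mul (prod_X_pow_mem_pow ?_ hrest) (prod_X_pow_mem hc hca)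
    rw [Finset.sum_tsub_distrib _ fun i _ => hcb i, hsum, hc, add_one_mul, Nat.add_sub_cancel]

end veroneseType

theorem stmt2_general (K : Type*) [Field K] (n d : ℕ) (a : Fin n → ℕ) (k : ℕ) :
    (veroneseType K n d a) ^ k = veroneseType K n (k * d) (fun i => k * a i) :=
  le_antisymm (veroneseType.pow_le d a k) <| Ideal.span_le.mpr <| by
    rintro _ ⟨b, hsum, hle, rfl⟩
    exact veroneseType.prod_X_pow_mem_pow hsum hle

/-- Powers of ideals of Veronese type are again of Veronese type:
`(I_{a,n,d})^k = I_{ka,n,kd}`. -/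
theorem stmt2 (K : Type*) [Field K] (n d : ℕ) (hn : 1 ≤ n) (hd : 1 ≤ d)
    (a : Fin n → ℕ) (ha1 : ∀ i, 1 ≤ a i) (had : ∀ i, a i ≤ d) (hmono : Antitone a)
    (k : ℕ) (hk : 1 ≤ k) :
    (veroneseType K n d a) ^ k = veroneseType K n (k * d) (fun i => k * a i) :=
  stmt2_general K n d a k
end

section
/- Let K be a field, S = K[x_1, …, x_n], and let c, d ≥ 1 be integers with c ≤ d. Let I be the ideal of S generated by all monomials x_1^{b_1}⋯x_n^{b_n} with Σ_i b_i = d and b_i ≤ c for all i. Then for every integer k ≥ 1, the minimal number of generators of I^k is μ(I^k) = Σ_{j=0}^{⌊kd/(kc+1)⌋} (−1)^j · C(n, j) · C(kd + n − 1 − j(kc+1), n − 1). -/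
open Finset

/-- The set of exponent vectors: sum `s`, entries bounded by `c`. -/
def Bset (n s c : ℕ) : Finset (Fin n → ℕ) :=
  (finAntidiagonal n s).filter (fun b => ∀ i, b i ≤ c)

lemma mem_Bset {n s c : ℕ} {b : Fin n → ℕ} :
    b ∈ Bset n s c ↔ (∑ i, b i) = s ∧ ∀ i, b i ≤ c := by
  simp [Bset, mem_finAntidiagonal]

/-- Stars and bars. -/
lemma card_finAntidiagonal (n s : ℕ) (hn : 1 ≤ n) :
    #(finAntidiagonal n s) = (s + n - 1).choose (n - 1) := by
  have h0 : Nat.card {b : Fin n → ℕ // ∑ i, b i = s} = (s + n - 1).choose (n - 1) := by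
    rw [Nat.card_congr (Sym.equivNatSumOfFintype (Fin n) s).symm, Nat.card_eq_fintype_card,
      Sym.card_sym_eq_choose, Fintype.card_fin]
    have h2 : n + s - 1 = s + n - 1 := by omega
    rw [h2]
    rcases Nat.eq_zero_or_pos s with rfl|hs
    · simp
    · have h3 : n - 1 = (s + n - 1) - s := by omega
      rw [h3, Nat.choose_symm (by omega)]
  rw [← h0, ← Nat.card_eq_finsetCard]
  exact Nat.card_congr (Equiv.subtypeEquivRight (fun b => mem_finAntidiagonal))

lemma zchoose_eq_zero_of {n s c j : ℕ} (hn : 1 ≤ n) (h : s < j * (c + 1)) :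
    zchoose ((s : ℤ) + n - 1 - j * ((c : ℤ) + 1)) (n - 1) = 0 := by
  unfold zchoose
  split
  · apply Nat.choose_eq_zero_of_lt
    have hj : (j : ℤ) * ((c : ℤ) + 1) = (↑(j * (c + 1)) : ℤ) := by push_cast; ring
    omega
  · rfl

lemma card_shift (n s c : ℕ) (hn : 1 ≤ n) (S : Finset (Fin n)) :
    ((#((finAntidiagonal n s).filter (fun b => ∀ i ∈ S, c + 1 ≤ b i)) : ℤ)) =
      zchoose ((s : ℤ) + n - 1 - #S * ((c : ℤ) + 1)) (n - 1) := by
  by_cases h : (c + 1) * #S ≤ s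
  · set t := s - (c + 1) * #S with ht
    have hshift : ∀ b : Fin n → ℕ, (∑ i, (fun i => if i ∈ S then c + 1 else 0 : Fin n → ℕ) i) =
        (c + 1) * #S := by
      intro b
      rw [Finset.sum_ite_mem, Finset.univ_inter, Finset.sum_const, smul_eq_mul, mul_comm]
    have hcard : #((finAntidiagonal n s).filter (fun b => ∀ i ∈ S, c + 1 ≤ b i)) =
        #(finAntidiagonal n t) := by
      apply Finset.card_nbij' (i := fun b => b - (fun i => if i ∈ S then c + 1 else 0))
        (j := fun b => b + (fun i => if i ∈ S then c + 1 else 0))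
      · intro b hb
        simp only [Finset.mem_coe, mem_filter, mem_finAntidiagonal] at hb
        rw [Finset.mem_coe, mem_finAntidiagonal]
        have : ∀ i, (b - fun i => if i ∈ S then c + 1 else 0) i
            = b i - (if i ∈ S then c + 1 else 0) := fun i => rfl
        simp only [Pi.sub_apply]
        have hsub : ∑ i, (b i - (if i ∈ S then c + 1 else 0)) =
            (∑ i, b i) - ∑ i, (if i ∈ S then c + 1 else 0) := by
          rw [eq_comm, Nat.sub_eq_iff_eq_add, ← Finset.sum_add_distrib]
          · apply Finset.sum_congr rfl
            intro i _
            split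
            · next hi => have := hb.2 i hi; omega
            · omega
          · apply Finset.sum_le_sum
            intro i _
            split
            · next hi => exact hb.2 i hi
            · exact Nat.zero_le _
        rw [hsub, hb.1, hshift b]
      · intro b hb
        rw [Finset.mem_coe, mem_finAntidiagonal] at hb
        simp only [Finset.mem_coe, mem_filter, mem_finAntidiagonal, Pi.add_apply]
        constructor
        · rw [Finset.sum_add_distrib, hb, hshift b]
          omega
        · intro i hi
          simp [hi]
      · intro b hb
        simp only [Finset.mem_coe, mem_filter, mem_finAntidiagonal] at hb
        funext i
        simp only [Pi.add_apply, Pi.sub_apply]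
        split
        · next hi => have := hb.2 i hi; omega
        · omega
      · intro b hb
        funext i
        simp only [Pi.add_apply, Pi.sub_apply]
        omega
    rw [hcard, card_finAntidiagonal n t hn]
    clear hcard hshift
    have hz : (#S : ℤ) * ((c : ℤ) + 1) = (((c + 1) * #S : ℕ) : ℤ) := by push_cast; ring
    have harg : ((s : ℤ) + n - 1 - #S * ((c : ℤ) + 1)) = ((t + n - 1 : ℕ) : ℤ) := by
      rw [hz]; omega
    rw [harg]
    simp [zchoose]
  · rw [Finset.filter_false_of_mem, Finset.card_empty]
    · rw [Nat.cast_zero, eq_comm]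
      have hm : #S * (c + 1) = (c + 1) * #S := Nat.mul_comm _ _
      rw [zchoose_eq_zero_of (s := s) (c := c) (j := #S) hn (by omega), Nat.cast_zero]
    · intro b hb hball
      rw [mem_finAntidiagonal] at hb
      have : (c + 1) * #S ≤ ∑ i, b i := by
        calc (c + 1) * #S = ∑ _i ∈ S, (c + 1) := by rw [Finset.sum_const, smul_eq_mul, mul_comm]
        _ ≤ ∑ i ∈ S, b i := Finset.sum_le_sum (fun i hi => hball i hi)
        _ ≤ ∑ i, b i := Finset.sum_le_sum_of_subset (Finset.subset_univ S)
      omega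

lemma card_Bset (n s c : ℕ) (hn : 1 ≤ n) :
    (#(Bset n s c) : ℤ) =
      ∑ j ∈ range (s / (c + 1) + 1),
        (-1 : ℤ) ^ j * (n.choose j) * zchoose ((s : ℤ) + n - 1 - j * ((c : ℤ) + 1)) (n - 1) := by
  classical
  have key : ∀ b : Fin n → ℕ,
      (∑ S ∈ (univ : Finset (Fin n)).powerset, (-1 : ℤ) ^ #S *
        (if (∀ i ∈ S, c + 1 ≤ b i) then 1 else 0)) = (if ∀ i, b i ≤ c then 1 else 0) := by
    intro b
    set T := univ.filter (fun i => c + 1 ≤ b i) with hT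
    have hsub : ∀ S : Finset (Fin n), ((∀ i ∈ S, c + 1 ≤ b i) ↔ S ⊆ T) := by
      intro S
      constructor
      · intro h i hi
        simp only [hT, mem_filter, mem_univ, true_and]
        exact h i hi
      · intro h i hi
        have := h hi
        simp only [hT, mem_filter] at this
        exact this.2
    calc ∑ S ∈ (univ : Finset (Fin n)).powerset, (-1 : ℤ) ^ #S *
          (if (∀ i ∈ S, c + 1 ≤ b i) then 1 else 0)
        = ∑ S ∈ (univ : Finset (Fin n)).powerset, (if S ⊆ T then (-1 : ℤ) ^ #S else 0) := by
          apply Finset.sum_congr rfl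
          intro S _
          rw [mul_ite, mul_one, mul_zero, if_congr (hsub S) rfl rfl]
      _ = ∑ S ∈ ((univ : Finset (Fin n)).powerset).filter (· ⊆ T), (-1 : ℤ) ^ #S :=
          (Finset.sum_filter _ _).symm
      _ = ∑ S ∈ T.powerset, (-1 : ℤ) ^ #S := by
          congr 1
          ext S
          simp [Finset.mem_powerset, Finset.subset_univ]
      _ = if T = ∅ then 1 else 0 := Finset.sum_powerset_neg_one_pow_card
      _ = if ∀ i, b i ≤ c then 1 else 0 := by
          congr 1
          simp only [hT, eq_iff_iff, Finset.filter_eq_empty_iff, mem_univ]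
          constructor
          · intro h i; have := @h i trivial; omega
          · intro h i _; have := h i; omega
  calc (#(Bset n s c) : ℤ)
      = ∑ b ∈ finAntidiagonal n s, (if ∀ i, b i ≤ c then (1 : ℤ) else 0) := by
        rw [Bset, Finset.card_filter]
        push_cast
        rfl
    _ = ∑ b ∈ finAntidiagonal n s, ∑ S ∈ (univ : Finset (Fin n)).powerset, (-1 : ℤ) ^ #S *
          (if (∀ i ∈ S, c + 1 ≤ b i) then 1 else 0) := by
        exact Finset.sum_congr rfl (fun b _ => (key b).symm)
    _ = ∑ S ∈ (univ : Finset (Fin n)).powerset, (-1 : ℤ) ^ #S *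
          (#((finAntidiagonal n s).filter (fun b => ∀ i ∈ S, c + 1 ≤ b i)) : ℤ) := by
        rw [Finset.sum_comm]
        apply Finset.sum_congr rfl
        intro S _
        rw [Finset.card_filter, ← Finset.mul_sum]
        push_cast
        rfl
    _ = ∑ S ∈ (univ : Finset (Fin n)).powerset, (-1 : ℤ) ^ #S *
          zchoose ((s : ℤ) + n - 1 - #S * ((c : ℤ) + 1)) (n - 1) := by
        exact Finset.sum_congr rfl (fun S _ => by rw [card_shift n s c hn S])
    _ = ∑ j ∈ range (n + 1), (-1 : ℤ) ^ j * (n.choose j) *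
          zchoose ((s : ℤ) + n - 1 - j * ((c : ℤ) + 1)) (n - 1) := by
        rw [Finset.sum_powerset]
        rw [Finset.card_univ, Fintype.card_fin]
        apply Finset.sum_congr rfl
        intro j _
        rw [Finset.sum_congr rfl (fun S hS => by
          rw [(Finset.mem_powersetCard.1 hS).2]), Finset.sum_const, Finset.card_powersetCard,
          Finset.card_univ, Fintype.card_fin, nsmul_eq_mul]
        push_cast
        ring
    _ = ∑ j ∈ range (s / (c + 1) + 1), (-1 : ℤ) ^ j * (n.choose j) *
          zchoose ((s : ℤ) + n - 1 - j * ((c : ℤ) + 1)) (n - 1) := by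
        set q := s / (c + 1) with hq
        set f : ℕ → ℤ := fun j => (-1 : ℤ) ^ j * (n.choose j) *
          zchoose ((s : ℤ) + n - 1 - j * ((c : ℤ) + 1)) (n - 1) with hf
        have hvan : ∀ j, n < j ∨ q < j → f j = 0 := by
          intro j hj
          rcases hj with hj | hj
          · simp [hf, Nat.choose_eq_zero_of_lt hj]
          · have hs : s < j * (c + 1) :=
              (Nat.div_lt_iff_lt_mul (by omega : 0 < c + 1)).1 (hq ▸ hj)
            simp [hf, zchoose_eq_zero_of hn hs]
        have h1 : ∑ j ∈ range (n + 1), f j = ∑ j ∈ range (n + 1 + (q + 1)), f j := by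
          apply (Finset.sum_subset (Finset.range_subset_range.2 (Nat.le_add_right _ _)) _)
          intro j _ hj
          rw [Finset.mem_range, not_lt] at hj
          exact hvan j (Or.inl (by omega))
        have h2 : ∑ j ∈ range (q + 1), f j
            = ∑ j ∈ range (n + 1 + (q + 1)), f j := by
          apply (Finset.sum_subset (Finset.range_subset_range.2 (Nat.le_add_left _ _)) _)
          intro j _ hj
          rw [Finset.mem_range, not_lt] at hj
          exact hvan j (Or.inr (by omega))
        rw [h1, ← h2]

/-- Discrete intermediate value: any value between `∑ l` and `∑ u` is achieved. -/
lemma myExistsBetween (n : ℕ) : ∀ (m : ℕ) (l u : Fin n → ℕ) (t : ℕ), (∀ i, l i ≤ u i) →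
    (∑ i, l i) ≤ t → t ≤ ∑ i, u i → t - (∑ i, l i) = m →
    ∃ a : Fin n → ℕ, (∀ i, l i ≤ a i) ∧ (∀ i, a i ≤ u i) ∧ (∑ i, a i) = t := by
  intro m
  induction m with
  | zero =>
    intro l u t h1 h2 h3 h4
    exact ⟨l, fun i => le_rfl, h1, by omega⟩
  | succ m ih =>
    intro l u t h1 h2 h3 h4
    have hlt : ∑ i, l i < ∑ i, u i := by omega
    have hex : ∃ i, l i < u i := by
      by_contra hno
      push_neg at hno
      have : ∑ i, u i ≤ ∑ i, l i := Finset.sum_le_sum (fun i _ => hno i)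
      omega
    obtain ⟨i0, hi0⟩ := hex
    have hsum : ∑ j, Function.update l i0 (l i0 + 1) j = (∑ j, l j) + 1 := by
      rw [Finset.sum_update_of_mem (Finset.mem_univ i0)]
      rw [← Finset.sum_erase_add Finset.univ l (Finset.mem_univ i0)]
      rw [Finset.sdiff_singleton_eq_erase]
      omega
    have hmono : ∀ i, l i ≤ Function.update l i0 (l i0 + 1) i := by
      intro i
      rcases eq_or_ne i i0 with h | h
      · subst h; rw [Function.update_self]; omega
      · rw [Function.update_of_ne h]
    have hb1 : ∀ i, Function.update l i0 (l i0 + 1) i ≤ u i := by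
      intro i
      rcases eq_or_ne i i0 with h | h
      · subst h; rw [Function.update_self]; omega
      · rw [Function.update_of_ne h]; exact h1 i
    have hb2 : ∑ i, Function.update l i0 (l i0 + 1) i ≤ t := by omega
    have hb4 : t - ∑ i, Function.update l i0 (l i0 + 1) i = m := by omega
    obtain ⟨a, ha1, ha2, ha3⟩ := ih (Function.update l i0 (l i0 + 1)) u t hb1 hb2 h3 hb4
    exact ⟨a, fun i => le_trans (hmono i) (ha1 i), ha2, ha3⟩

/-- One-step decomposition of an exponent vector of a power. -/
lemma decomp_step (n d c k : ℕ) (b : Fin n → ℕ) (hb : ∑ i, b i = (k + 1) * d)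
    (hbc : ∀ i, b i ≤ (k + 1) * c) :
    ∃ a r : Fin n → ℕ, (∑ i, a i = d) ∧ (∀ i, a i ≤ c) ∧ (∑ i, r i = k * d) ∧
      (∀ i, r i ≤ k * c) ∧ b = a + r := by
  classical
  set l : Fin n → ℕ := fun i => b i - k * c with hl
  set u : Fin n → ℕ := fun i => min (b i) c with hu
  have hlu : ∀ i, l i ≤ u i := by
    intro i
    have h1 := hbc i
    have h2 : (k + 1) * c = k * c + c := by ring
    simp only [hl, hu, le_min_iff]
    omega
  have hsu : d ≤ ∑ i, u i := by
    have hstep : ∀ i, b i ≤ (k + 1) * u i := by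
      intro i
      rcases le_total (b i) c with h | h
      · simp only [hu, min_eq_left h]
        exact Nat.le_mul_of_pos_left _ (by omega)
      · simp only [hu, min_eq_right h]
        exact hbc i
    have hmul : (k + 1) * d ≤ (k + 1) * ∑ i, u i := by
      rw [← hb, Finset.mul_sum]
      exact Finset.sum_le_sum (fun i _ => hstep i)
    exact Nat.le_of_mul_le_mul_left hmul (by omega)
  have hsl : ∑ i, l i ≤ d := by
    set U := Finset.univ.filter (fun i => k * c < b i) with hU
    have hrestr : ∑ i ∈ U, l i = ∑ i, l i := by
      apply Finset.sum_subset (Finset.filter_subset _ _)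
      intro i _ hi
      simp only [hU, Finset.mem_filter, Finset.mem_univ, true_and, not_lt] at hi
      simp only [hl]
      omega
    rcases le_or_gt (#U * c) d with hcase | hcase
    · calc ∑ i, l i = ∑ i ∈ U, l i := hrestr.symm
        _ ≤ ∑ _i ∈ U, c := Finset.sum_le_sum (fun i _ => by
            have h1 := hbc i
            have h2 : (k + 1) * c = k * c + c := by ring
            simp only [hl]; omega)
        _ = #U * c := by rw [Finset.sum_const, smul_eq_mul]
        _ ≤ d := hcase
    · have hE : (∑ i ∈ U, l i) + #U * (k * c) = ∑ i ∈ U, b i := by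
        have hrw : #U * (k * c) = ∑ _i ∈ U, k * c := by rw [Finset.sum_const, smul_eq_mul]
        rw [hrw, ← Finset.sum_add_distrib]
        · apply Finset.sum_congr rfl
          intro i hi
          simp only [hU, Finset.mem_filter] at hi
          simp only [hl]
          omega
      have hUb : ∑ i ∈ U, b i ≤ (k + 1) * d := by
        rw [← hb]
        exact Finset.sum_le_sum_of_subset (Finset.subset_univ U)
      have h4 : k * d ≤ k * (#U * c) := Nat.mul_le_mul_left k (by omega)
      have h5 : #U * (k * c) = k * (#U * c) := by ring
      have h6 : (k + 1) * d = k * d + d := by ring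
      omega
  obtain ⟨a, ha1, ha2, ha3⟩ := myExistsBetween n (d - ∑ i, l i) l u d hlu hsl hsu rfl
  refine ⟨a, b - a, ha3, fun i => le_trans (ha2 i) (min_le_right _ _), ?_, ?_, ?_⟩
  · have hab : ∀ i, a i ≤ b i := fun i => le_trans (ha2 i) (min_le_left _ _)
    have : (∑ i, (b - a) i) + ∑ i, a i = ∑ i, b i := by
      rw [← Finset.sum_add_distrib]
      apply Finset.sum_congr rfl
      intro i _
      simp only [Pi.sub_apply]
      have := hab i
      omega
    have h6 : (k + 1) * d = k * d + d := by ring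
    omega
  · intro i
    have := ha1 i
    simp only [hl] at this
    simp only [Pi.sub_apply]
    omega
  · funext i
    simp only [Pi.add_apply, Pi.sub_apply]
    have := le_trans (ha2 i) (min_le_left _ _)
    omega

open MvPolynomial in
/-- The monomial set generating the ideal. -/
noncomputable def Mset (K : Type*) [Field K] (n s c : ℕ) :
    Finset (MvPolynomial (Fin n) K) := by
  classical
  exact (Bset n s c).image (fun b => ∏ i, X i ^ b i)

namespace VeroneseAux

open MvPolynomial

variable {K : Type*} [Field K] {n : ℕ}

lemma prodX_eq (b : Fin n → ℕ) :
    (∏ i, X i ^ b i : MvPolynomial (Fin n) K) =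
      monomial (Finsupp.equivFunOnFinite.symm b) 1 := by
  rw [← prod_X_pow_eq_monomial]
  rw [eq_comm]
  apply Finset.prod_subset (Finset.subset_univ _)
  intro i _ hi
  have : Finsupp.equivFunOnFinite.symm b i = 0 := by
    rwa [← Finsupp.notMem_support_iff]
  rw [this, pow_zero]

lemma mem_Mset {m : MvPolynomial (Fin n) K} {s c : ℕ} :
    m ∈ Mset K n s c ↔ ∃ b ∈ Bset n s c, (∏ i, X i ^ b i : MvPolynomial (Fin n) K) = m := by
  classical
  simp [Mset]

lemma card_Mset (s c : ℕ) : #(Mset K n s c) = #(Bset n s c) := by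
  classical
  apply Finset.card_image_of_injective
  intro a b hab
  simp only [prodX_eq] at hab
  have := monomial_left_injective (one_ne_zero : (1 : K) ≠ 0) hab
  exact Finsupp.equivFunOnFinite.symm.injective this

/-- Elements of the span have vanishing coefficients below degree `s`. -/
lemma coeff_eq_zero_of_mem_span {s c : ℕ} {p : MvPolynomial (Fin n) K}
    (hp : p ∈ Ideal.span ((Mset K n s c : Set (MvPolynomial (Fin n) K))))
    (v : Fin n →₀ ℕ) (hv : (∑ i, v i) < s) : coeff v p = 0 := by
  classical
  set J : Ideal (MvPolynomial (Fin n) K) :=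
    { carrier := {q | ∀ w : Fin n →₀ ℕ, (∑ i, w i) < s → coeff w q = 0}
      add_mem' := by
        intro a b ha hb w hw
        rw [coeff_add, ha w hw, hb w hw, add_zero]
      zero_mem' := by
        intro w hw
        rw [coeff_zero]
      smul_mem' := by
        intro f q hq w hw
        rw [smul_eq_mul, coeff_mul]
        apply Finset.sum_eq_zero
        intro x hx
        rw [Finset.HasAntidiagonal.mem_antidiagonal] at hx
        have hle : ∀ i, x.2 i ≤ w i := by
          intro i
          rw [← hx]
          simp [Finsupp.add_apply]
        have : (∑ i, x.2 i) < s :=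
          lt_of_le_of_lt (Finset.sum_le_sum (fun i _ => hle i)) hw
        rw [hq x.2 this, mul_zero] } with hJ
  have hMJ : (Mset K n s c : Set (MvPolynomial (Fin n) K)) ⊆ J := by
    intro m hm
    rw [Finset.mem_coe, mem_Mset] at hm
    obtain ⟨b, hb, rfl⟩ := hm
    intro w hw
    rw [prodX_eq, coeff_monomial]
    rw [mem_Bset] at hb
    split
    · next heq =>
      exfalso
      have : ∑ i, (Finsupp.equivFunOnFinite.symm b) i = ∑ i, w i := by rw [heq]
      have hbs : ∑ i, (Finsupp.equivFunOnFinite.symm b) i = ∑ i, b i := rfl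
      omega
    · rfl
  exact (Ideal.span_le.2 hMJ hp) v hv

lemma degree_eq_sum (v : Fin n →₀ ℕ) : v.degree = ∑ i, v i := by
  rw [Finsupp.degree]
  apply Finset.sum_subset (Finset.subset_univ _)
  intro i _ hi
  rwa [← Finsupp.notMem_support_iff]

lemma hc_monomial (s : ℕ) (u : Fin n →₀ ℕ) (hu : (∑ i, u i) = s) :
    homogeneousComponent s (monomial u (1 : K)) = monomial u 1 := by
  apply MvPolynomial.ext
  intro w
  rw [coeff_homogeneousComponent]
  rcases eq_or_ne u w with rfl | hne
  · rw [if_pos]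
    rw [degree_eq_sum, hu]
  · rw [coeff_monomial, if_neg hne, ite_self]

lemma hc_mul_mem {s c : ℕ} {g : MvPolynomial (Fin n) K}
    (hg : g ∈ Ideal.span ((Mset K n s c : Set (MvPolynomial (Fin n) K))))
    (f : MvPolynomial (Fin n) K) :
    homogeneousComponent s (f * g) = (coeff 0 f) • homogeneousComponent s g := by
  apply MvPolynomial.ext
  intro w
  rw [coeff_smul, coeff_homogeneousComponent, coeff_homogeneousComponent]
  split
  · next hw =>
    rw [degree_eq_sum] at hw
    rw [coeff_mul]
    rw [Finset.sum_eq_single_of_mem (0, w) (by rw [Finset.HasAntidiagonal.mem_antidiagonal, zero_add])]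
    · rw [smul_eq_mul]
    · intro x hx hxne
      rw [Finset.HasAntidiagonal.mem_antidiagonal] at hx
      have hle : ∀ i, x.2 i ≤ w i := by
        intro i
        rw [← hx]
        simp [Finsupp.add_apply]
      have hsle : (∑ i, x.2 i) ≤ ∑ i, w i := Finset.sum_le_sum (fun i _ => hle i)
      rcases lt_or_eq_of_le hsle with hlt | heq
      · rw [coeff_eq_zero_of_mem_span hg x.2 (by omega), mul_zero]
      · exfalso
        have hx1 : ∀ i, x.1 i = 0 := by
          intro i
          have h1 : (∑ i, x.1 i) + ∑ i, x.2 i = ∑ i, w i := by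
            rw [← Finset.sum_add_distrib]
            apply Finset.sum_congr rfl
            intro i _
            rw [← hx]
            simp [Finsupp.add_apply]
          have h2 : ∑ i, x.1 i = 0 := by omega
          exact (Finset.sum_eq_zero_iff.1 h2) i (Finset.mem_univ i)
        apply hxne
        have hx10 : x.1 = 0 := Finsupp.ext (fun i => hx1 i)
        have : x.2 = w := by rw [← hx, hx10, zero_add]
        rw [Prod.ext_iff]
        exact ⟨hx10, this⟩
  · rw [smul_zero]

end VeroneseAux

namespace VeroneseAux

open MvPolynomial

variable {K : Type*} [Field K] {n : ℕ}

lemma card_le_of_span_eq (s c : ℕ) (t : Finset (MvPolynomial (Fin n) K))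
    (ht : Ideal.span (t : Set (MvPolynomial (Fin n) K)) =
      Ideal.span ((Mset K n s c : Set (MvPolynomial (Fin n) K)))) :
    #(Bset n s c) ≤ #t := by
  classical
  set T := homogeneousComponent (σ := Fin n) (R := K) s with hT
  set w : Finset (MvPolynomial (Fin n) K) := t.image (fun g => T g) with hw
  have hmem : ∀ b : Fin n → ℕ, b ∈ Bset n s c →
      (monomial (Finsupp.equivFunOnFinite.symm b) (1 : K)) ∈
        Submodule.span K (w : Set (MvPolynomial (Fin n) K)) := by
    intro b hb
    have hmon : (monomial (Finsupp.equivFunOnFinite.symm b) (1 : K)) ∈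
        Ideal.span (t : Set (MvPolynomial (Fin n) K)) := by
      rw [ht]
      apply Ideal.subset_span
      rw [Finset.mem_coe, mem_Mset]
      exact ⟨b, hb, prodX_eq b⟩
    obtain ⟨f, -, hf⟩ := Submodule.mem_span_finset.1 hmon
    have hTm : T (monomial (Finsupp.equivFunOnFinite.symm b) (1 : K)) =
        monomial (Finsupp.equivFunOnFinite.symm b) (1 : K) := by
      apply hc_monomial
      have : ∀ i, (Finsupp.equivFunOnFinite.symm b) i = b i := fun i => rfl
      rw [Finset.sum_congr rfl (fun i _ => this i)]
      exact (mem_Bset.1 hb).1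
    have hspan : ∀ g ∈ t, g ∈ Ideal.span ((Mset K n s c : Set (MvPolynomial (Fin n) K))) := by
      intro g hg
      rw [← ht]
      exact Ideal.subset_span hg
    have hexp : T (∑ g ∈ t, f g • g) = ∑ g ∈ t, (coeff 0 (f g)) • T g := by
      rw [map_sum]
      apply Finset.sum_congr rfl
      intro g hg
      rw [smul_eq_mul, hT]
      exact hc_mul_mem (hspan g hg) (f g)
    rw [← hTm, ← hf, hexp]
    apply Submodule.sum_mem
    intro g hg
    apply Submodule.smul_mem
    apply Submodule.subset_span
    rw [Finset.mem_coe, hw]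
    exact Finset.mem_image_of_mem _ hg
  have hli : LinearIndependent K
      (fun b : {x // x ∈ Bset n s c} =>
        (monomial (Finsupp.equivFunOnFinite.symm b.1) (1 : K))) := by
    have h0 := (basisMonomials (Fin n) K).linearIndependent
    have h1 := h0.comp (fun b : {x // x ∈ Bset n s c} => Finsupp.equivFunOnFinite.symm b.1)
      (fun x y hxy => Subtype.ext (Finsupp.equivFunOnFinite.symm.injective hxy))
    have h2 : (⇑(basisMonomials (Fin n) K) ∘
        fun b : {x // x ∈ Bset n s c} => Finsupp.equivFunOnFinite.symm b.1) =
        fun b : {x // x ∈ Bset n s c} =>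
          (monomial (Finsupp.equivFunOnFinite.symm b.1) (1 : K)) := by
      funext b
      simp [coe_basisMonomials]
    rwa [h2] at h1
  have hrange : Set.range (fun b : {x // x ∈ Bset n s c} =>
      (monomial (Finsupp.equivFunOnFinite.symm b.1) (1 : K))) ≤
      Submodule.span K (w : Set (MvPolynomial (Fin n) K)) := by
    rintro _ ⟨b, rfl⟩
    exact hmem b.1 b.2
  have hcard := linearIndependent_le_span' _ hli (w : Set (MvPolynomial (Fin n) K)) hrange
  rw [Cardinal.mk_coe_finset] at hcard
  have hfin : Fintype.card (w : Set (MvPolynomial (Fin n) K)) = #w := by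
    simp
  rw [hfin] at hcard
  have : #(Bset n s c) ≤ #w := by exact_mod_cast hcard
  exact le_trans this (Finset.card_image_le)

lemma mu_span_Mset (s c : ℕ) :
    mu (Ideal.span ((Mset K n s c : Set (MvPolynomial (Fin n) K)))) = #(Bset n s c) := by
  unfold mu
  apply le_antisymm
  · exact Nat.sInf_le ⟨Mset K n s c, card_Mset s c, rfl⟩
  · refine le_csInf ⟨#(Bset n s c), Mset K n s c, card_Mset s c, rfl⟩ ?_
    rintro m ⟨t, rfl, hsp⟩
    exact card_le_of_span_eq s c t hsp

lemma span_Mset_mul (s1 c1 s2 c2 : ℕ)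
    (hdec : ∀ b ∈ Bset n (s1 + s2) (c1 + c2),
      ∃ a ∈ Bset n s1 c1, ∃ r ∈ Bset n s2 c2, b = a + r) :
    Ideal.span ((Mset K n s1 c1 : Set (MvPolynomial (Fin n) K))) *
      Ideal.span ((Mset K n s2 c2 : Set (MvPolynomial (Fin n) K)))
      = Ideal.span ((Mset K n (s1 + s2) (c1 + c2) : Set (MvPolynomial (Fin n) K))) := by
  have hprod : ∀ a r : Fin n → ℕ, (∏ i, X i ^ (a + r) i : MvPolynomial (Fin n) K)
      = (∏ i, X i ^ a i) * (∏ i, X i ^ r i) := by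
    intro a r
    rw [← Finset.prod_mul_distrib]
    apply Finset.prod_congr rfl
    intro i _
    rw [Pi.add_apply, pow_add]
  rw [Ideal.span_mul_span']
  apply le_antisymm
  · apply Ideal.span_le.2
    rintro x hx
    obtain ⟨p, hp, q, hq, rfl⟩ := Set.mem_mul.1 hx
    rw [Finset.mem_coe, mem_Mset] at hp hq
    obtain ⟨a, ha, rfl⟩ := hp
    obtain ⟨r, hr, rfl⟩ := hq
    apply Ideal.subset_span
    rw [Finset.mem_coe, mem_Mset]
    refine ⟨a + r, ?_, (hprod a r)⟩
    rw [mem_Bset] at ha hr ⊢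
    constructor
    · simp only [Pi.add_apply]
      rw [Finset.sum_add_distrib, ha.1, hr.1]
    · intro i
      exact add_le_add (ha.2 i) (hr.2 i)
  · apply Ideal.span_le.2
    intro m hm
    rw [Finset.mem_coe, mem_Mset] at hm
    obtain ⟨b, hb, rfl⟩ := hm
    obtain ⟨a, ha, r, hr, rfl⟩ := hdec b hb
    rw [hprod a r]
    apply Ideal.subset_span
    exact Set.mul_mem_mul (by rw [Finset.mem_coe, mem_Mset]; exact ⟨a, ha, rfl⟩)
      (by rw [Finset.mem_coe, mem_Mset]; exact ⟨r, hr, rfl⟩)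

end VeroneseAux

namespace VeroneseAux

open MvPolynomial

variable {K : Type*} [Field K] {n : ℕ}

lemma span_Mset_pow (d c : ℕ) : ∀ k, 1 ≤ k →
    (Ideal.span ((Mset K n d c : Set (MvPolynomial (Fin n) K)))) ^ k
      = Ideal.span ((Mset K n (k * d) (k * c) : Set (MvPolynomial (Fin n) K))) := by
  intro k hk
  induction k with
  | zero => omega
  | succ k ih =>
    rcases Nat.eq_zero_or_pos k with rfl | hk'
    · rw [pow_one]
      norm_num
    · rw [pow_succ, ih hk']
      have hmul := span_Mset_mul (K := K) (n := n) (k * d) (k * c) d c ?_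
      · rw [hmul]
        have h1 : k * d + d = (k + 1) * d := by ring
        have h2 : k * c + c = (k + 1) * c := by ring
        rw [h1, h2]
      · intro b hb
        rw [mem_Bset] at hb
        have hb1 : ∑ i, b i = (k + 1) * d := by rw [hb.1]; ring
        have hb2 : ∀ i, b i ≤ (k + 1) * c := by
          intro i
          have := hb.2 i
          have h3 : k * c + c = (k + 1) * c := by ring
          omega
        obtain ⟨a, r, ha1, ha2, hr1, hr2, hbar⟩ := decomp_step n d c k b hb1 hb2
        refine ⟨r, ?_, a, ?_, ?_⟩
        · rw [mem_Bset]; exact ⟨hr1, hr2⟩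
        · rw [mem_Bset]; exact ⟨ha1, ha2⟩
        · rw [hbar, add_comm]

end VeroneseAux

open VeroneseAux in
/-- Minimal number of generators of powers of the ideal generated by all monomials
of degree `d` whose exponents are bounded by `c`. -/
theorem stmt3 (K : Type*) [Field K] (n c d : ℕ) (hn : 1 ≤ n) (hc : 1 ≤ c)
    (hcd : c ≤ d) (k : ℕ) (hk : 1 ≤ k)
    (I : Ideal (MvPolynomial (Fin n) K))
    (hI : I = Ideal.span {m | ∃ b : Fin n → ℕ, (∑ i, b i) = d ∧ (∀ i, b i ≤ c) ∧
      m = ∏ i, MvPolynomial.X i ^ b i}) :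
    (mu (I ^ k) : ℤ) =
      ∑ j ∈ Finset.range (k * d / (k * c + 1) + 1), (-1 : ℤ) ^ j * (n.choose j) *
        zchoose ((k : ℤ) * d + n - 1 - j * ((k : ℤ) * c + 1)) (n - 1) := by
  have hset : {m : MvPolynomial (Fin n) K | ∃ b : Fin n → ℕ, (∑ i, b i) = d ∧ (∀ i, b i ≤ c) ∧
      m = ∏ i, MvPolynomial.X i ^ b i} = ((Mset K n d c : Set (MvPolynomial (Fin n) K))) := by
    ext m
    simp only [Set.mem_setOf_eq, Finset.mem_coe, mem_Mset, mem_Bset]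
    constructor
    · rintro ⟨b, h1, h2, h3⟩
      exact ⟨b, ⟨h1, h2⟩, h3.symm⟩
    · rintro ⟨b, ⟨h1, h2⟩, h3⟩
      exact ⟨b, h1, h2, h3.symm⟩
  rw [hI, hset, span_Mset_pow d c k hk, mu_span_Mset, card_Bset n (k * d) (k * c) hn]
  apply Finset.sum_congr rfl
  intro j _
  have harg : ((k * d : ℕ) : ℤ) + n - 1 - j * (((k * c : ℕ) : ℤ) + 1)
      = (k : ℤ) * d + n - 1 - j * ((k : ℤ) * c + 1) := by push_cast; ring
  rw [harg]
end

section
/- Fix integers n, d, c ≥ 1 and t ≥ 0 with n − (d−1)t ≥ 1. The number of t-spread multisets of size d in {1, …, n} all of whose blocks have size at most c equals the number of multisets of size d in {1, …, n − (d−1)t} in which every element appears with multiplicity at most c. Equivalently, |A_{c,(n,d,t)}| = |A_{c,(n−(d−1)t, d, 0)}|. -/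
/-- A (weakly increasing) `d`-tuple with entries in `{1,…,n}` (modelled as `Fin n`)
is `t`-spread if consecutive entries differ by at least `t`. -/
def IsTSpread {n d : ℕ} (t : ℕ) (i : Fin d → Fin n) : Prop :=
  ∀ (j : ℕ) (h : j + 1 < d), (i ⟨j, by omega⟩ : ℕ) + t ≤ (i ⟨j + 1, h⟩ : ℕ)

/-- A `t`-spread tuple has all blocks of size at most `c` if there is no index `j`
with `c` consecutive gaps all equal to `t`. -/
def BlocksLe {n d : ℕ} (c t : ℕ) (i : Fin d → Fin n) : Prop :=
  ∀ (j : ℕ) (hj : j + c < d), ∃ (l : ℕ) (hl : l < c),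
    (i ⟨j + l + 1, by omega⟩ : ℕ) ≠ (i ⟨j + l, by omega⟩ : ℕ) + t

section Aux

variable {d m : ℕ}

/-- multiplicity vector of a tuple -/
def cnt (j : Fin d → Fin m) (v : Fin m) : ℕ := (List.ofFn j).count v

lemma cnt_eq_card (j : Fin d → Fin m) (v : Fin m) :
    cnt j v = (Finset.univ.filter fun k => j k = v).card := by
  classical
  rw [cnt, ← Multiset.coe_count, List.ofFn_eq_map, ← Multiset.map_coe]
  have huniv : ((List.finRange d : List (Fin d)) : Multiset (Fin d))
      = (Finset.univ : Finset (Fin d)).val := rfl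
  rw [huniv, Multiset.count_map, Finset.card_def, Finset.filter_val]
  congr 1
  exact Multiset.filter_congr (fun a _ => by constructor <;> exact fun h => h.symm)

lemma sum_cnt (j : Fin d → Fin m) : ∑ v, cnt j v = d := by
  classical
  simp only [cnt_eq_card]
  have h := Finset.card_eq_sum_card_fiberwise
    (f := j) (s := Finset.univ) (t := Finset.univ) (fun a _ => Finset.mem_univ _)
  simpa using h.symm

/-- NoRun: no `c+1` consecutive equal entries. -/
def NoRun (c : ℕ) (j : Fin d → Fin m) : Prop :=
  ∀ (k : ℕ) (hk : k + c < d), ∃ (l : ℕ) (hl : l < c),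
    j ⟨k + l + 1, by omega⟩ ≠ j ⟨k + l, by omega⟩

lemma cnt_le_of_noRun {c : ℕ} (hc : 1 ≤ c) {j : Fin d → Fin m} (hmono : Monotone j)
    (h : NoRun c j) (v : Fin m) : cnt j v ≤ c := by
  classical
  by_contra hv
  push_neg at hv
  rw [cnt_eq_card] at hv
  set F := Finset.univ.filter fun k => j k = v with hF
  have hne : F.Nonempty := Finset.card_pos.mp (by omega)
  set a := F.min' hne
  set z := F.max' hne
  have ha : j a = v := (Finset.mem_filter.mp (F.min'_mem hne)).2
  have hz : j z = v := (Finset.mem_filter.mp (F.max'_mem hne)).2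
  have hsub : F ⊆ Finset.Icc a z := fun k hk =>
    Finset.mem_Icc.mpr ⟨F.min'_le k hk, F.le_max' k hk⟩
  have hcard : F.card ≤ (z : ℕ) + 1 - a := by
    have := Finset.card_le_card hsub
    rwa [Fin.card_Icc] at this
  have haz : (a : ℕ) + c ≤ z := by omega
  have hkd : (a : ℕ) + c < d := by omega
  obtain ⟨l, hl, hne'⟩ := h a hkd
  have hmid : ∀ (s : ℕ) (hs : s ≤ c), j ⟨(a : ℕ) + s, by omega⟩ = v := by
    intro s hs
    have h1 : j a ≤ j ⟨(a : ℕ) + s, by omega⟩ := hmono (by simp [Fin.le_def])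
    have h2 : j ⟨(a : ℕ) + s, by omega⟩ ≤ j z := hmono (by simp [Fin.le_def]; omega)
    rw [ha] at h1; rw [hz] at h2
    exact le_antisymm h2 h1
  exact hne' (by rw [show ((⟨(a:ℕ)+l+1, by omega⟩ : Fin d)) = ⟨(a:ℕ)+(l+1), by omega⟩ by rfl,
    hmid (l+1) (by omega), hmid l (by omega)])

lemma noRun_of_cnt_le {c : ℕ} {j : Fin d → Fin m}
    (h : ∀ v, cnt j v ≤ c) : NoRun c j := by
  classical
  intro k hk
  by_contra hcon
  push_neg at hcon
  set v := j ⟨k, by omega⟩ with hv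
  have hall : ∀ (l : ℕ), l ≤ c → ∀ (hkl : k + l < d), j ⟨k + l, hkl⟩ = v := by
    intro l
    induction l with
    | zero => intro _ _; rfl
    | succ s ih =>
      intro hl hkl
      have h1 : j ⟨k + s + 1, by omega⟩ = j ⟨k + s, by omega⟩ := hcon s (by omega)
      have h2 := ih (by omega) (by omega)
      calc j ⟨k + (s + 1), hkl⟩ = j ⟨k + s + 1, by omega⟩ := by congr 1
        _ = v := by rw [h1, h2]
  have hsub : (Finset.range (c + 1)).image (fun l => (⟨k + min l c, by omega⟩ : Fin d))
      ⊆ Finset.univ.filter fun k' => j k' = v := by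
    intro x hx
    obtain ⟨l, hl, rfl⟩ := Finset.mem_image.mp hx
    have hl' := Finset.mem_range.mp hl
    exact Finset.mem_filter.mpr ⟨Finset.mem_univ _, hall (min l c) (by omega) _⟩
  have hinj : Set.InjOn (fun l => (⟨k + min l c, by omega⟩ : Fin d)) (Finset.range (c+1)) := by
    intro x hx y hy hxy
    simp only [Fin.mk.injEq] at hxy
    have hx' := Finset.mem_coe.mp hx
    have hy' := Finset.mem_coe.mp hy
    rw [Finset.mem_range] at hx' hy'
    omega
  have := Finset.card_le_card hsub
  rw [Finset.card_image_of_injOn hinj, Finset.card_range] at this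
  have := h v
  rw [cnt_eq_card] at this
  omega

lemma mono_of_adj {f : Fin d → Fin m}
    (h : ∀ (k : ℕ) (hk : k + 1 < d), f ⟨k, by omega⟩ ≤ f ⟨k + 1, hk⟩) : Monotone f := by
  have key : ∀ (s a : ℕ) (ha : a + s < d), f ⟨a, by omega⟩ ≤ f ⟨a + s, ha⟩ := by
    intro s
    induction s with
    | zero => intro a ha; exact le_refl _
    | succ u ih =>
      intro a ha
      exact le_trans (ih a (by omega))
        (by rw [show (⟨a + (u+1), ha⟩ : Fin d) = ⟨(a + u) + 1, by omega⟩ by rfl]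
            exact h (a + u) (by omega))
  intro x y hxy
  have : f ⟨(x : ℕ), x.2⟩ ≤ f ⟨(x : ℕ) + ((y : ℕ) - x), by omega⟩ := key _ _ (by omega)
  have hx : (⟨(x : ℕ), x.2⟩ : Fin d) = x := rfl
  have hy : (⟨(x : ℕ) + ((y : ℕ) - (x : ℕ)), by omega⟩ : Fin d) = y := by
    apply Fin.ext; simp; omega
  rwa [hx, hy] at this

/-- the canonical sorted list with multiplicities `b` -/
def lst (b : Fin m → ℕ) : List (Fin m) :=
  (List.finRange m).flatMap fun v => List.replicate (b v) v

lemma count_lst (b : Fin m → ℕ) (v : Fin m) : (lst b).count v = b v := by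
  classical
  rw [lst, List.count_flatMap]
  rw [show (List.map (List.count v ∘ fun w => List.replicate (b w) w) (List.finRange m)).sum
      = ∑ w : Fin m, List.count v (List.replicate (b w) w) by
    rw [Fin.sum_univ_def]; rfl]
  simp [List.count_replicate]

lemma length_lst (b : Fin m → ℕ) : (lst b).length = ∑ v, b v := by
  classical
  have : ∀ w ∈ (↑(lst b) : Multiset (Fin m)), w ∈ (Finset.univ : Finset (Fin m)) :=
    fun w _ => Finset.mem_univ w
  have h := Multiset.sum_count_eq_card this
  simp only [Multiset.coe_count, Multiset.coe_card] at h
  rw [← h]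
  exact Finset.sum_congr rfl fun v _ => by rw [count_lst]

lemma pairwise_replicate' {α : Type*} {R : α → α → Prop} (a : α) (h : R a a) :
    ∀ n, List.Pairwise R (List.replicate n a)
  | 0 => List.Pairwise.nil
  | n + 1 => by
      rw [List.replicate_succ]
      exact List.Pairwise.cons
        (fun y hy => by rw [List.eq_of_mem_replicate hy]; exact h)
        (pairwise_replicate' a h n)

lemma sorted_lst (b : Fin m → ℕ) : (lst b).Pairwise (· ≤ ·) := by
  rw [lst, List.pairwise_flatMap]
  constructor
  · intro a _
    exact pairwise_replicate' a (le_refl a) (b a)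
  · refine (List.pairwise_lt_finRange m).imp ?_
    intro v w hvw x hx y hy
    rw [List.eq_of_mem_replicate hx, List.eq_of_mem_replicate hy]
    exact le_of_lt hvw

end Aux

section Equivs

variable {n d c t : ℕ}

lemma spread_gap {i : Fin d → Fin n} (hs : IsTSpread t i) :
    ∀ (s a : ℕ) (h : a + s < d), (i ⟨a, by omega⟩ : ℕ) + s * t ≤ i ⟨a + s, h⟩ := by
  intro s
  induction s with
  | zero => intro a h; simp
  | succ u ih =>
    intro a h
    have h1 := ih a (by omega)
    have h2 := hs (a + u) (by omega)
    have h3 : (i ⟨a + (u + 1), h⟩ : ℕ) = i ⟨a + u + 1, by omega⟩ := by congr 1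
    have h4 : (u + 1) * t = u * t + t := by ring
    omega

lemma spread_low {i : Fin d → Fin n} (hs : IsTSpread t i) (k : Fin d) :
    (k : ℕ) * t ≤ i k := by
  have h1 := spread_gap hs (k : ℕ) 0 (by omega)
  have h2 : (⟨0 + (k : ℕ), by omega⟩ : Fin d) = k := by apply Fin.ext; simp
  rw [h2] at h1
  omega

lemma spread_shift_bound {i : Fin d → Fin n} (hs : IsTSpread t i) (k : Fin d) :
    (i k : ℕ) - (k : ℕ) * t < n - (d - 1) * t := by
  have h1 := spread_low hs k
  have hk := k.2
  have h2 := spread_gap hs ((d - 1) - (k : ℕ)) (k : ℕ) (by omega)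
  have h3 : (i ⟨(k : ℕ) + ((d - 1) - (k : ℕ)), by omega⟩ : ℕ) < n := (i _).2
  have h4 : (⟨(k : ℕ), k.2⟩ : Fin d) = k := by apply Fin.ext; simp
  rw [h4] at h2
  have hsplit : (k : ℕ) * t + ((d - 1) - (k : ℕ)) * t = (d - 1) * t := by
    rw [← Nat.add_mul]; congr 1; omega
  omega

def E1 (hd : 1 ≤ d) (hc : 1 ≤ c) (hnt : (d - 1) * t < n) :
    {i : Fin d → Fin n // Monotone i ∧ IsTSpread t i ∧ BlocksLe c t i} ≃
    {j : Fin d → Fin (n - (d - 1) * t) // Monotone j ∧ ∀ v, cnt j v ≤ c} where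
  toFun x :=
    ⟨fun k => ⟨(x.1 k : ℕ) - (k : ℕ) * t, spread_shift_bound x.2.2.1 k⟩, by
      obtain ⟨i, hmono, hsp, hbl⟩ := x
      have hlow := spread_low hsp
      constructor
      · apply mono_of_adj
        intro k hk
        have h1 := hsp k hk
        have h2 := hlow (⟨k, by omega⟩ : Fin d)
        have h3 := hlow (⟨k + 1, hk⟩ : Fin d)
        simp only [Fin.mk_le_mk, Fin.le_def]
        have h4 : (k + 1) * t = k * t + t := by ring
        simp only [Fin.val_mk] at h2 h3 ⊢
        omega
      · intro v
        apply cnt_le_of_noRun hc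
        · apply mono_of_adj
          intro k hk
          have h1 := hsp k hk
          have h2 := hlow (⟨k, by omega⟩ : Fin d)
          have h3 := hlow (⟨k + 1, hk⟩ : Fin d)
          simp only [Fin.mk_le_mk, Fin.le_def]
          have h4 : (k + 1) * t = k * t + t := by ring
          simp only [Fin.val_mk] at h2 h3 ⊢
          omega
        · intro k hk
          obtain ⟨l, hl, hne⟩ := hbl k hk
          refine ⟨l, hl, fun hcon => hne ?_⟩
          have hval := congrArg Fin.val hcon
          have h2 := hlow (⟨k + l, by omega⟩ : Fin d)
          have h3 := hlow (⟨k + l + 1, by omega⟩ : Fin d)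
          simp only [Fin.val_mk] at hval h2 h3 ⊢
          have h4 : (k + l + 1) * t = (k + l) * t + t := by ring
          omega⟩
  invFun y :=
    ⟨fun k => ⟨(y.1 k : ℕ) + (k : ℕ) * t, by
        have h1 := (y.1 k).2
        have h2 : (k : ℕ) * t ≤ (d - 1) * t := Nat.mul_le_mul_right t (by omega)
        omega⟩, by
      obtain ⟨j, hmono, hcnt⟩ := y
      have hadj : ∀ (k : ℕ) (hk : k + 1 < d),
          (j ⟨k, by omega⟩ : ℕ) ≤ (j ⟨k + 1, hk⟩ : ℕ) := by
        intro k hk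
        exact hmono (by simp [Fin.le_def])
      refine ⟨?_, ?_, ?_⟩
      · apply mono_of_adj
        intro k hk
        have h1 := hadj k hk
        simp only [Fin.mk_le_mk, Fin.le_def, Fin.val_mk]
        have h4 : (k + 1) * t = k * t + t := by ring
        omega
      · intro k hk
        have h1 := hadj k hk
        simp only [Fin.val_mk]
        have h4 : (k + 1) * t = k * t + t := by ring
        omega
      · intro k hk
        obtain ⟨l, hl, hne⟩ := noRun_of_cnt_le hcnt k hk
        refine ⟨l, hl, fun hcon => hne ?_⟩
        apply Fin.ext
        simp only [Fin.val_mk] at hcon ⊢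
        have h4 : (k + l + 1) * t = (k + l) * t + t := by ring
        omega⟩
  left_inv x := by
    obtain ⟨i, hmono, hsp, hbl⟩ := x
    apply Subtype.ext
    funext k
    apply Fin.ext
    have h1 := spread_low hsp k
    simp only [Fin.val_mk]
    omega
  right_inv y := by
    obtain ⟨j, hmono, hcnt⟩ := y
    apply Subtype.ext
    funext k
    apply Fin.ext
    simp only [Fin.val_mk]
    omega

lemma ofFn_get' {α : Type*} {d : ℕ} (l : List α) (h : l.length = d) :
    List.ofFn (fun k : Fin d => l.get ⟨(k : ℕ), by omega⟩) = l := by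
  subst h
  have : (fun k : Fin l.length => l.get ⟨(k : ℕ), by omega⟩) = l.get := by
    funext k; congr 1
  rw [this, List.ofFn_get]

def E2 {m : ℕ} :
    {j : Fin d → Fin m // Monotone j ∧ ∀ v, cnt j v ≤ c} ≃
    {b : Fin m → ℕ // (∑ i, b i) = d ∧ ∀ i, b i ≤ c} where
  toFun x := ⟨cnt x.1, sum_cnt x.1, x.2.2⟩
  invFun y :=
    ⟨fun k => (lst y.1).get ⟨(k : ℕ), by rw [length_lst, y.2.1]; exact k.2⟩, by
      obtain ⟨b, hsum, hle⟩ := y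
      have hlen : (lst b).length = d := by rw [length_lst, hsum]
      constructor
      · intro x y hxy
        exact (sorted_lst b).sortedLE.monotone_get (Fin.mk_le_mk.mpr (Fin.le_def.mp hxy))
      · intro v
        rw [cnt, ofFn_get' (lst b) hlen, count_lst]
        exact hle v⟩
  left_inv x := by
    obtain ⟨j, hmono, hcnt⟩ := x
    have key : lst (cnt j) = List.ofFn j :=
      List.Perm.eq_of_sortedLE
        (sorted_lst _).sortedLE (List.sortedLE_ofFn_iff.mpr hmono)
        (List.perm_iff_count.mpr fun v => by rw [count_lst]; rfl)
    apply Subtype.ext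
    funext k
    show (lst (cnt j)).get ⟨(k : ℕ), _⟩ = j k
    have h1 := List.get_of_eq key ⟨(k : ℕ), by
      rw [length_lst, sum_cnt]; exact k.2⟩
    rw [h1, List.get_ofFn]
    congr 1
  right_inv y := by
    obtain ⟨b, hsum, hle⟩ := y
    have hlen : (lst b).length = d := by rw [length_lst, hsum]
    apply Subtype.ext
    funext v
    show cnt (fun k : Fin d => (lst b).get ⟨(k : ℕ), _⟩) v = b v
    rw [cnt, ofFn_get' (lst b) hlen, count_lst]

end Equivs

/-- The number of `t`-spread multisets of size `d` in `{1,…,n}` with all blocks of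
size at most `c` equals the number of multisets of size `d` in `{1,…,n-(d-1)t}`
in which every element occurs with multiplicity at most `c`; the latter are recorded
by their multiplicity vectors `b` with `∑ b = d` and `b i ≤ c`. -/
theorem stmt9 (n d c t : ℕ) (hn : 1 ≤ n) (hd : 1 ≤ d) (hc : 1 ≤ c)
    (hnt : (d - 1) * t < n) :
    Nat.card {i : Fin d → Fin n // Monotone i ∧ IsTSpread t i ∧ BlocksLe c t i} =
      Nat.card {b : Fin (n - (d - 1) * t) → ℕ // (∑ i, b i) = d ∧ ∀ i, b i ≤ c} := by
  exact Nat.card_congr ((E1 hd hc hnt).trans E2)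
end
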